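/- Let G ∈ 𝒢_{0,m2} (no loops, no restriction on the size of m2). Let f_d(G) denote the number of ordered 6-tuples (v1,v2,v3,v4,v5,v6) of distinct vertices of G such that v2v5 is a double edge, v1v4 and v3v6 are simple edges, and v1v2, v2v3, v4v5 and v5v6 are non-edges. Then f_d(G) ≥ 2·m2·M·( M − 8·m2 − 12Δ − 4Δ² ). -/

import Mathlib

/-
Encode a d-switching `(v₁, …, v₆)` by the double arc `(v₂, v₅)` and the two simple arcs
`(v₁, v₄)`, `(v₃, v₆)` (edges are counted as ordered pairs). For a fixed double arc `(x, y)`, a pair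
of simple arcs fails to give a d-switching only if one of the arcs starts in `{x, y} ∪ N(x)` or ends
in `{x, y} ∪ N(y)`, or the second arc meets an endpoint of the first. At most `Δ` arcs leave or
enter any vertex, so at most `S (12Δ + 4Δ²)` of the `S²` pairs fail, where `S = M - 4 m₂` is the
number of simple arcs. Summing over the `2 m₂` double arcs gives
`f_d ≥ 2 m₂ S (S - 12Δ - 4Δ²)`, and this dominates the stated bound.
-/

open Finset

namespace Finset

theorem card_filter_product_le_mul {α β : Type*} {s : Finset α} {t : Finset β}
    {P : α → β → Prop} [∀ a, DecidablePred (P a)] {B : ℕ}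
    (h : ∀ a ∈ s, #(t.filter (P a)) ≤ B) :
    #((s ×ˢ t).filter fun r => P r.1 r.2) ≤ #s * B := by
  rw [card_filter, sum_product]
  simp only [← card_filter]
  exact sum_le_card_nsmul _ _ _ h

end Finset

namespace Multigraph

variable {V : Type*} [Fintype V]

def neighbors (m : V → V → ℕ) (v : V) : Finset V := univ.filter (m v · ≠ 0)

theorem card_neighbors_le_sum (m : V → V → ℕ) (v : V) : #(neighbors m v) ≤ ∑ u, m v u := by
  calc #(neighbors m v) = ∑ u ∈ neighbors m v, 1 := card_eq_sum_ones _
    _ ≤ ∑ u ∈ neighbors m v, m v u :=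
      sum_le_sum fun u hu => Nat.one_le_iff_ne_zero.2 (mem_filter.1 hu).2
    _ ≤ ∑ u, m v u := sum_le_sum_of_subset (subset_univ _)

/-- `t i` is the vertex `v_{i+1}` of the paper. -/
def dSwitchings (m : V → V → ℕ) : Set (Fin 6 → V) :=
  {t | Function.Injective t ∧ m (t 1) (t 4) = 2 ∧ m (t 0) (t 3) = 1 ∧ m (t 2) (t 5) = 1 ∧
    m (t 0) (t 1) = 0 ∧ m (t 1) (t 2) = 0 ∧ m (t 3) (t 4) = 0 ∧ m (t 4) (t 5) = 0}

variable [DecidableEq V]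

def arcsWithMult (m : V → V → ℕ) (k : ℕ) : Finset (V × V) :=
  univ.filter fun q => q.1 ≠ q.2 ∧ m q.1 q.2 = k

def forbiddenNear (m : V → V → ℕ) (x y : V) : Finset V := insert x (insert y (neighbors m x))

/-- The pairs of arcs `((a, b), (c, e))` of `S` for which `(a, x, c, b, y, e)` is a d-switching
at the double arc `(x, y)`, once `S` is the set of simple arcs. -/
def switchingPartners (m : V → V → ℕ) (S : Finset (V × V)) (x y : V) :
    Finset ((V × V) × (V × V)) :=
  (S ×ˢ S).filter fun r =>
    ¬ (r.1.1 ∈ forbiddenNear m x y ∨ r.1.2 ∈ forbiddenNear m y x) ∧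
    ¬ (r.2.1 ∈ forbiddenNear m x y ∨ r.2.2 ∈ forbiddenNear m y x) ∧
    ¬ (r.2.1 ∈ ({r.1.1, r.1.2} : Finset V) ∨ r.2.2 ∈ ({r.1.1, r.1.2} : Finset V))

variable {m : V → V → ℕ}

theorem sum_mult_eq_card_arcsWithMult (hloop : ∀ v, m v v = 0)
    (hmul : ∀ u v, u ≠ v → m u v ≤ 2) :
    ∑ q : V × V, m q.1 q.2 = #(arcsWithMult m 1) + 2 * #(arcsWithMult m 2) := by
  have hsplit : ∀ q : V × V, m q.1 q.2 =
      (if q.1 ≠ q.2 ∧ m q.1 q.2 = 1 then 1 else 0) +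
        2 * (if q.1 ≠ q.2 ∧ m q.1 q.2 = 2 then 1 else 0) := by
    rintro ⟨u, v⟩
    dsimp only
    rcases eq_or_ne u v with rfl | huv
    · simp [hloop]
    · have := hmul u v huv
      simp only [ne_eq, huv, not_false_eq_true, true_and]
      split_ifs <;> omega
  simp only [arcsWithMult, card_filter, mul_sum, ← sum_add_distrib, ← hsplit]

theorem card_filter_fst_mem_or_snd_mem_le (hsymm : ∀ u v, m u v = m v u)
    {S : Finset (V × V)} (hS : ∀ q ∈ S, m q.1 q.2 ≠ 0) {Δ : ℕ}
    (hΔ : ∀ w, #(neighbors m w) ≤ Δ) (W₁ W₂ : Finset V) :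
    #(S.filter fun q => q.1 ∈ W₁ ∨ q.2 ∈ W₂) ≤ (#W₁ + #W₂) * Δ := by
  have hfst : S.filter (·.1 ∈ W₁) ⊆ W₁.biUnion fun w => {w} ×ˢ neighbors m w := by
    rintro ⟨a, b⟩ hq
    obtain ⟨hqS, ha⟩ := mem_filter.1 hq
    simpa [neighbors, ha] using hS _ hqS
  have hsnd : S.filter (·.2 ∈ W₂) ⊆ W₂.biUnion fun w => neighbors m w ×ˢ {w} := by
    rintro ⟨a, b⟩ hq
    obtain ⟨hqS, hb⟩ := mem_filter.1 hq
    simpa [neighbors, hb, hsymm b] using hS _ hqS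
  rw [filter_or, add_mul]
  refine (card_union_le _ _).trans (add_le_add ?_ ?_)
  · exact (card_le_card hfst).trans <|
      card_biUnion_le_card_mul _ _ _ fun w _ => by simpa using hΔ w
  · exact (card_le_card hsnd).trans <|
      card_biUnion_le_card_mul _ _ _ fun w _ => by simpa using hΔ w

theorem card_sq_le_card_switchingPartners_add (hsymm : ∀ u v, m u v = m v u)
    {S : Finset (V × V)} (hS : ∀ q ∈ S, m q.1 q.2 ≠ 0) {Δ : ℕ}
    (hΔ : ∀ w, #(neighbors m w) ≤ Δ) (x y : V) :
    #S * #S ≤ #(switchingPartners m S x y) + #S * (12 * Δ + 4 * Δ ^ 2) := by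
  have hforbidden : ∀ u v, #(forbiddenNear m u v) ≤ 2 + Δ := fun u v =>
    (card_insert_le _ _).trans <| by grw [card_insert_le, hΔ u]; omega
  set blocked := S.filter fun q => q.1 ∈ forbiddenNear m x y ∨ q.2 ∈ forbiddenNear m y x
  have hblocked : #blocked ≤ (4 + 2 * Δ) * Δ := by
    grw [card_filter_fst_mem_or_snd_mem_le hsymm hS hΔ, hforbidden, hforbidden]
    linarith
  have hclash : ∀ a ∈ S, #(S.filter fun q => q.1 ∈ ({a.1, a.2} : Finset V) ∨
      q.2 ∈ ({a.1, a.2} : Finset V)) ≤ 4 * Δ := fun a _ => by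
    grw [card_filter_fst_mem_or_snd_mem_le hsymm hS hΔ, card_le_two]
  have hbad : S ×ˢ S \ switchingPartners m S x y ⊆
      (blocked ×ˢ S ∪ S ×ˢ blocked) ∪ (S ×ˢ S).filter fun r =>
        r.2.1 ∈ ({r.1.1, r.1.2} : Finset V) ∨ r.2.2 ∈ ({r.1.1, r.1.2} : Finset V) := by
    intro r
    simp only [switchingPartners, blocked, mem_sdiff, mem_filter, mem_product, mem_union]
    tauto
  calc #S * #S = #(S ×ˢ S) := (card_product S S).symm
    _ ≤ #(S ×ˢ S \ switchingPartners m S x y) + #(switchingPartners m S x y) :=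
      card_le_card_sdiff_add_card
    _ ≤ #blocked * #S + #S * #blocked + #S * (4 * Δ) + #(switchingPartners m S x y) := by
      grw [card_le_card hbad, card_union_le, card_union_le, card_product, card_product,
        card_filter_product_le_mul hclash]
    _ ≤ #(switchingPartners m S x y) + #S * (12 * Δ + 4 * Δ ^ 2) := by
      grw [hblocked]
      linarith

theorem card_sigma_switchingPartners_le_ncard (hsymm : ∀ u v, m u v = m v u) :
    #((arcsWithMult m 2).sigma fun p => switchingPartners m (arcsWithMult m 1) p.1 p.2) ≤
      (dSwitchings m).ncard := by
  rw [← Set.ncard_coe_finset]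
  refine Set.ncard_le_ncard_of_injOn
    (fun z => ![z.2.1.1, z.1.1, z.2.2.1, z.2.1.2, z.1.2, z.2.2.2]) ?_ ?_
  · rintro ⟨⟨x, y⟩, ⟨a, b⟩, c, e⟩ hz
    simp only [mem_coe, mem_sigma, arcsWithMult, switchingPartners, forbiddenNear, neighbors,
      mem_filter, mem_univ, true_and, mem_product, mem_insert, mem_singleton, not_or, ne_eq,
      not_not] at hz
    obtain ⟨⟨hxy, hxy2⟩, ⟨⟨hab, hab1⟩, hce, hce1⟩, ⟨⟨hax, hay, hxa⟩, hby, hbx, hyb⟩,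
      ⟨⟨hcx, hcy, hxc⟩, hey, hex, hye⟩, ⟨hca, hcb⟩, hea, heb⟩ := hz
    refine ⟨?_, hxy2, hab1, hce1, hsymm a x ▸ hxa, hxc, hsymm b y ▸ hyb, hye⟩
    rw [← List.nodup_ofFn]
    simp only [Nat.succ_eq_add_one, Nat.reduceAdd, List.ofFn_succ, Fin.isValue,
      Matrix.cons_val_zero, Matrix.cons_val_succ, Matrix.cons_val_fin_one, List.ofFn_zero,
      List.nodup_cons, List.mem_cons, List.not_mem_nil, or_false, not_or, not_false_eq_true,
      List.nodup_nil, and_self, and_true]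
    exact ⟨⟨hax, Ne.symm hca, hab, hay, Ne.symm hea⟩, ⟨Ne.symm hcx, Ne.symm hbx, hxy, Ne.symm hex⟩,
      ⟨hcb, hcy, hce⟩, ⟨hby, Ne.symm heb⟩, Ne.symm hey⟩
  · refine (Function.LeftInverse.injective
      (g := fun t => ⟨(t 1, t 4), (t 0, t 3), (t 2, t 5)⟩) ?_).injOn
    rintro ⟨⟨x, y⟩, ⟨a, b⟩, c, e⟩
    rfl

theorem card_mul_sq_le_ncard_dSwitchings_add (hsymm : ∀ u v, m u v = m v u) {Δ : ℕ}
    (hΔ : ∀ w, #(neighbors m w) ≤ Δ) :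
    #(arcsWithMult m 2) * (#(arcsWithMult m 1) * #(arcsWithMult m 1)) ≤
      (dSwitchings m).ncard +
        #(arcsWithMult m 2) * (#(arcsWithMult m 1) * (12 * Δ + 4 * Δ ^ 2)) := by
  set S := arcsWithMult m 1
  set D := arcsWithMult m 2
  have hS : ∀ q ∈ S, m q.1 q.2 ≠ 0 := fun q hq => (mem_filter.1 hq).2.2 ▸ one_ne_zero
  calc #D * (#S * #S) = ∑ _p ∈ D, #S * #S := by rw [sum_const, smul_eq_mul]
    _ ≤ ∑ p ∈ D, (#(switchingPartners m S p.1 p.2) + #S * (12 * Δ + 4 * Δ ^ 2)) :=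
      sum_le_sum fun p _ => card_sq_le_card_switchingPartners_add hsymm hS hΔ p.1 p.2
    _ = #(D.sigma fun p => switchingPartners m S p.1 p.2) + #D * (#S * (12 * Δ + 4 * Δ ^ 2)) := by
      rw [sum_add_distrib, card_sigma, sum_const, smul_eq_mul]
    _ ≤ (dSwitchings m).ncard + #D * (#S * (12 * Δ + 4 * Δ ^ 2)) := by
      grw [card_sigma_switchingPartners_le_ncard hsymm]

end Multigraph

open Multigraph

theorem fd_lower_general (n : ℕ) (d : Fin n → ℕ) (mG : Fin n → Fin n → ℕ)
    (M Δ m2 : ℕ)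
    (hM : M = ∑ i, d i)
    (hΔ : Δ = Finset.univ.sup d)
    (hsymm : ∀ u v, mG u v = mG v u)
    (hdeg : ∀ v, (∑ u ∈ Finset.univ.filter (fun u => u ≠ v), mG v u)
        + 2 * mG v v = d v)
    (hloop : ∀ v, mG v v = 0)
    (hmul : ∀ u v, u ≠ v → mG u v ≤ 2)
    (hm2 : 2 * m2 = Set.ncard {q : Fin n × Fin n | q.1 ≠ q.2 ∧ mG q.1 q.2 = 2})
    (fd : ℕ)
    (hfd : fd = Set.ncard {t : Fin 6 → Fin n | Function.Injective t ∧
      mG (t 1) (t 4) = 2 ∧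
      mG (t 0) (t 3) = 1 ∧ mG (t 2) (t 5) = 1 ∧
      mG (t 0) (t 1) = 0 ∧ mG (t 1) (t 2) = 0 ∧
      mG (t 3) (t 4) = 0 ∧ mG (t 4) (t 5) = 0}) :
    2 * (m2 : ℝ) * M * ((M : ℝ) - 8 * m2 - 12 * Δ - 4 * Δ ^ 2) ≤ (fd : ℝ) := by
  set S := arcsWithMult mG 1
  set D := arcsWithMult mG 2
  have hrow : ∀ v, ∑ u, mG v u = d v := fun v => by
    rw [← hdeg v, hloop v, filter_ne', sum_erase univ (hloop v), mul_zero, add_zero]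
  have hnbr : ∀ v, #(neighbors mG v) ≤ Δ := fun v =>
    (card_neighbors_le_sum mG v).trans <| (hrow v).trans_le <| hΔ ▸ le_sup (mem_univ v)
  have hD : #D = 2 * m2 := by
    rw [hm2, ← Set.ncard_coe_finset]
    simp [D, arcsWithMult]
  have hSD : #S + 4 * m2 = M := by
    have hsum : M = #S + 2 * #D := by
      rw [hM, ← sum_mult_eq_card_arcsWithMult hloop hmul, Fintype.sum_prod_type]
      simp only [hrow]
    omega
  have hcount := card_mul_sq_le_ncard_dSwitchings_add hsymm hnbr
  rw [hD, show (dSwitchings mG).ncard = fd from hfd.symm] at hcount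
  have hcountR : 2 * (m2 : ℝ) * (#S * #S) ≤ fd + 2 * m2 * (#S * (12 * Δ + 4 * Δ ^ 2)) := by
    exact_mod_cast hcount
  rw [← (by exact_mod_cast hSD : (#S : ℝ) + 4 * m2 = M)]
  have hm2_nonneg : (0 : ℝ) ≤ m2 := m2.cast_nonneg
  have hΔ_nonneg : (0 : ℝ) ≤ Δ := Δ.cast_nonneg
  nlinarith [mul_nonneg (mul_nonneg hm2_nonneg hm2_nonneg) hm2_nonneg,
    mul_nonneg (mul_nonneg hm2_nonneg hm2_nonneg) hΔ_nonneg,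
    mul_nonneg (mul_nonneg hm2_nonneg hm2_nonneg) (mul_nonneg hΔ_nonneg hΔ_nonneg)]

/-- **Unconditional lower bound on the number `f_d(G)` of d-switchings.**
`G ∈ 𝒢_{0,m2}` (loopless, no restriction on `m2`).  `f_d(G)` is the number of
ordered 6-tuples `(v1,…,v6)` of distinct vertices with `v2v5` a double edge,
`v1v4`, `v3v6` simple edges, and `v1v2`, `v2v3`, `v4v5`, `v5v6` non-edges.
Then `f_d(G) ≥ 2·m2·M·(M − 8·m2 − 12Δ − 4Δ²)`. -/
theorem fd_lower (n : ℕ) (d : Fin n → ℕ) (mG : Fin n → Fin n → ℕ)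
    (M M2 Δ m2 : ℕ)
    (hM : M = ∑ i, d i)
    (hM2 : M2 = ∑ i, d i * (d i - 1))
    (hΔ : Δ = Finset.univ.sup d)
    (hsymm : ∀ u v, mG u v = mG v u)
    (hdeg : ∀ v, (∑ u ∈ Finset.univ.filter (fun u => u ≠ v), mG v u)
        + 2 * mG v v = d v)
    (hloop : ∀ v, mG v v = 0)
    (hmul : ∀ u v, u ≠ v → mG u v ≤ 2)
    (hm2 : 2 * m2 = Set.ncard {q : Fin n × Fin n | q.1 ≠ q.2 ∧ mG q.1 q.2 = 2})
    (fd : ℕ)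
    (hfd : fd = Set.ncard {t : Fin 6 → Fin n | Function.Injective t ∧
      mG (t 1) (t 4) = 2 ∧
      mG (t 0) (t 3) = 1 ∧ mG (t 2) (t 5) = 1 ∧
      mG (t 0) (t 1) = 0 ∧ mG (t 1) (t 2) = 0 ∧
      mG (t 3) (t 4) = 0 ∧ mG (t 4) (t 5) = 0}) :
    2 * (m2 : ℝ) * M * ((M : ℝ) - 8 * m2 - 12 * Δ - 4 * Δ ^ 2) ≤ (fd : ℝ) :=
  fd_lower_general n d mG M Δ m2 hM hΔ hsymm hdeg hloop hmul hm2 fd hfd
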